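/- arXiv:math/0412438 — 6 statements merged into one kernel-verified Lean document; each statement's English description precedes it below -/
import Mathlib

section
/- Let (μ_k) be a sequence of barycentered Borel probability measures on S² converging weakly to a Borel probability measure μ. Then either μ is barycentered, or there exists a ∈ S² such that μ = (1/2)δ_a + (1/2)δ_{−a}. -/
/-!
The center of mass `∫ x dμ` is the integral of a bounded continuous vector-valued function, so it
passes to weak limits: the limit `μ` is centered. On a centered probability measure on the unit
sphere, the weight `1 + ⟪a, x⟫ ≥ 0` integrates to `1` and equals `2` at `a`, hence `μ {a} ≤ 1/2`.
If `μ {a} = 1/2`, the weight integrates to `0` off `a`, so it vanishes there almost everywhere,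
and the remaining mass sits at `-a`.
-/

noncomputable section

open MeasureTheory Filter Topology
open scoped ENNReal

/-- Euclidean 3-space. -/
abbrev E3 : Type := EuclideanSpace ℝ (Fin 3)

/-- The unit sphere `S²` in `ℝ³`. -/
abbrev S2 : Type := Metric.sphere (0 : E3) 1

/-- A Borel probability measure on the sphere is *barycentered* if every atom has mass
less than `1/2` and its Euclidean center of mass is the origin (equivalently, by
Douady–Earle, its conformal barycenter is the origin). -/
def IsBarycentered (μ : ProbabilityMeasure S2) : Prop :=
  (∀ x : S2, (μ : Measure S2) {x} < 1 / 2) ∧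
    (∫ x : S2, (x : E3) ∂(μ : Measure S2)) = 0

/-- The antipode `-x` of a point `x ∈ S²`. -/
def antipode (x : S2) : S2 :=
  ⟨-(x : E3), by
    rw [mem_sphere_zero_iff_norm, norm_neg]
    exact mem_sphere_zero_iff_norm.mp x.2⟩

open Metric BoundedContinuousFunction
open scoped RealInnerProductSpace

variable {E : Type*} [NormedAddCommGroup E] [MeasurableSpace E] [BorelSpace E]
  [SecondCountableTopology E]

theorem integrable_coe_sphere {r : ℝ} (M : Measure (sphere (0 : E) r)) [IsFiniteMeasure M] :
    Integrable (fun x : sphere (0 : E) r => (x : E)) M :=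
  Integrable.of_bound continuous_subtype_val.aestronglyMeasurable r
    (Eventually.of_forall fun x => (norm_eq_of_mem_sphere x).le)

variable [InnerProductSpace ℝ E] [CompleteSpace E]

theorem MeasureTheory.ProbabilityMeasure.integral_eq_zero_of_tendsto {X ι : Type*}
    [TopologicalSpace X] [MeasurableSpace X] [OpensMeasurableSpace X] {L : Filter ι} [L.NeBot]
    {μs : ι → ProbabilityMeasure X} {μ : ProbabilityMeasure X} (hμ : Tendsto μs L (𝓝 μ))
    (f : X →ᵇ E) (hf : ∀ i, ∫ x, f x ∂(μs i : Measure X) = 0) :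
    ∫ x, f x ∂(μ : Measure X) = 0 := by
  refine integral_eq_zero_of_forall_integral_inner_eq_zero ℝ _ (f.integrable _) fun c => ?_
  have h := tendsto_iff_forall_integral_tendsto.mp hμ
    ((innerSL ℝ c).compLeftContinuousBounded X f)
  simp only [ContinuousLinearMap.compLeftContinuousBounded_apply, innerSL_apply_apply,
    integral_inner (f.integrable _), hf, inner_zero_right] at h
  rw [integral_inner (f.integrable _)]
  exact (tendsto_nhds_unique tendsto_const_nhds h).symm

section CenteredOnSphere

variable {M : Measure (sphere (0 : E) 1)} [IsProbabilityMeasure M]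

theorem two_mul_measure_singleton_add_lintegral_compl_eq_one (hM : ∫ x, (x : E) ∂M = 0)
    (a : sphere (0 : E) 1) :
    2 * M {a} + ∫⁻ x in {a}ᶜ, ENNReal.ofReal (1 + ⟪(a : E), x⟫) ∂M = 1 := by
  have hint : Integrable (fun x : sphere (0 : E) 1 => 1 + ⟪(a : E), x⟫) M :=
    (integrable_const 1).add ((integrable_coe_sphere M).const_inner _)
  have hnonneg : 0 ≤ᵐ[M] fun x : sphere (0 : E) 1 => 1 + ⟪(a : E), x⟫ :=
    Eventually.of_forall fun x => neg_le_iff_add_nonneg'.mp <|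
      neg_one_le_real_inner_of_norm_eq_one (norm_eq_of_mem_sphere a) (norm_eq_of_mem_sphere x)
  have hmean : ∫ x, 1 + ⟪(a : E), x⟫ ∂M = 1 := by
    rw [integral_add (integrable_const 1) ((integrable_coe_sphere M).const_inner _),
      integral_inner (integrable_coe_sphere M), hM]
    simp
  have hatom : ENNReal.ofReal (1 + ⟪(a : E), a⟫) = 2 := by
    rw [real_inner_self_eq_norm_sq, norm_eq_of_mem_sphere]
    norm_num
  calc 2 * M {a} + ∫⁻ x in {a}ᶜ, ENNReal.ofReal (1 + ⟪(a : E), x⟫) ∂M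
      = ∫⁻ x in {a}, ENNReal.ofReal (1 + ⟪(a : E), x⟫) ∂M
          + ∫⁻ x in {a}ᶜ, ENNReal.ofReal (1 + ⟪(a : E), x⟫) ∂M := by
        rw [lintegral_singleton, hatom]
    _ = ENNReal.ofReal (∫ x, 1 + ⟪(a : E), x⟫ ∂M) := by
        rw [lintegral_add_compl _ (measurableSet_singleton a),
          ofReal_integral_eq_lintegral_ofReal hint hnonneg]
    _ = 1 := by rw [hmean, ENNReal.ofReal_one]

theorem measure_singleton_le_half_of_integral_eq_zero (hM : ∫ x, (x : E) ∂M = 0)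
    (a : sphere (0 : E) 1) : M {a} ≤ 1 / 2 := by
  rw [ENNReal.le_div_iff_mul_le (by norm_num) (by norm_num), mul_comm,
    ← two_mul_measure_singleton_add_lintegral_compl_eq_one hM a]
  exact le_self_add

theorem eq_half_dirac_add_half_dirac_neg_of_integral_eq_zero (hM : ∫ x, (x : E) ∂M = 0)
    {a : sphere (0 : E) 1} (ha : 1 / 2 ≤ M {a}) :
    M = (1 / 2 : ℝ≥0∞) • Measure.dirac a + (1 / 2 : ℝ≥0∞) • Measure.dirac (-a) := by
  have hMa : M {a} = 1 / 2 := (measure_singleton_le_half_of_integral_eq_zero hM a).antisymm ha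
  have hcompl : ∫⁻ x in {a}ᶜ, ENNReal.ofReal (1 + ⟪(a : E), x⟫) ∂M = 0 := by
    have h := two_mul_measure_singleton_add_lintegral_compl_eq_one hM a
    rw [hMa, ENNReal.mul_div_cancel' (by simp) (by simp)] at h
    exact (ENNReal.add_right_inj ENNReal.one_ne_top).mp (h.trans (add_zero 1).symm)
  have hae : ∀ᵐ x ∂M, x = a ∨ x = -a := by
    have h := (lintegral_eq_zero_iff (by fun_prop)).mp hcompl
    rw [EventuallyEq, ae_restrict_iff' (measurableSet_singleton a).compl] at h
    filter_upwards [h] with x hx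
    refine or_iff_not_imp_left.mpr fun hxa => Subtype.ext ?_
    have hle : 1 + ⟪(x : E), a⟫ ≤ 0 := by
      rw [real_inner_comm]; exact ENNReal.ofReal_eq_zero.mp (hx hxa)
    have hge := neg_one_le_real_inner_of_norm_eq_one (norm_eq_of_mem_sphere x)
      (norm_eq_of_mem_sphere a)
    exact (inner_eq_neg_one_iff_of_norm_eq_one (𝕜 := ℝ) (norm_eq_of_mem_sphere x)
      (norm_eq_of_mem_sphere a)).mp (by linarith)
  rw [Measure.ae_eq_or_eq_iff_eq_dirac_add_dirac (ne_neg_of_mem_unit_sphere ℝ a)] at hae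
  have hMna : M {-a} = 1 / 2 := by
    have h := congrArg (· Set.univ) hae
    simp only [measure_univ, Measure.add_apply, Measure.smul_apply, smul_eq_mul, mul_one, hMa]
      at h
    exact (ENNReal.add_right_inj (by simp)).mp (h.symm.trans (ENNReal.add_halves 1).symm)
  rw [hae, hMa, hMna]

end CenteredOnSphere

/-- If a sequence of barycentered probability measures on `S²` converges weakly to a
probability measure `μ`, then either `μ` is barycentered, or
`μ = (1/2) δ_a + (1/2) δ_{-a}` for some `a ∈ S²`. -/
theorem limit_of_barycentered_sequence
    (μk : ℕ → ProbabilityMeasure S2) (hbc : ∀ k, IsBarycentered (μk k))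
    (μ : ProbabilityMeasure S2) (hμ : Tendsto μk atTop (𝓝 μ)) :
    IsBarycentered μ ∨ ∃ a : S2,
      (μ : Measure S2) =
        (1 / 2 : ℝ≥0∞) • Measure.dirac a + (1 / 2 : ℝ≥0∞) • Measure.dirac (antipode a) := by
  have hcenter : ∫ x : S2, (x : E3) ∂(μ : Measure S2) = 0 :=
    ProbabilityMeasure.integral_eq_zero_of_tendsto hμ
      (mkOfCompact ⟨((↑) : S2 → E3), continuous_subtype_val⟩) fun k => (hbc k).2
  by_cases hatoms : ∀ x : S2, (μ : Measure S2) {x} < 1 / 2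
  · exact .inl ⟨hatoms, hcenter⟩
  obtain ⟨a, ha⟩ := not_forall.mp hatoms
  exact .inr ⟨a, eq_half_dirac_add_half_dirac_neg_of_integral_eq_zero hcenter (not_lt.mp ha)⟩
end
end

section
/- Let (μ_k) be a sequence of barycentered Borel probability measures on S² converging weakly to a probability measure ν. Suppose there are points p_k ∈ S² with p_k → a ∈ S², radii r_k → 0, and numbers ε_k → 0 such that μ_k(closed ball of center p_k and radius r_k) ≥ 1/2 − ε_k for every k. Then ν = (1/2)δ_a + (1/2)δ_{−a}. -/
noncomputable section

open MeasureTheory Filter Topology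
open scoped ENNReal

/-! Both hypotheses pass to the weak limit: the barycenter of `ν` is `0` (test against the bounded
continuous function `x ↦ x`), and the portmanteau theorem on the closed balls `B(a, δ)`, which
eventually contain `B(p_k, r_k)`, gives `ν {a} ≥ 1/2`. On the sphere `1 + ⟪a, x⟫` is nonnegative,
equals `2` at `a` and has `ν`-mean `1`, so `2 ν {a} ≤ 1`; equality forces it to vanish `ν`-a.e.
off `a`, i.e. the other half of the mass sits at `-a`. -/

open Metric
open scoped RealInnerProductSpace BoundedContinuousFunction

namespace MeasureTheory

theorem Measure.eq_smul_dirac_add_smul_dirac_of_ae {α : Type*} [MeasurableSpace α]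
    [MeasurableSingletonClass α] {μ : Measure α} {a b : α} (h : ∀ᵐ x ∂μ, x = a ∨ x = b)
    (hab : a ≠ b) : μ = μ {a} • Measure.dirac a + μ {b} • Measure.dirac b := by
  calc μ = μ.restrict ({a} ∪ {b}) := (Measure.restrict_eq_self_of_ae_mem h).symm
    _ = _ := by
      rw [Measure.restrict_union (Set.disjoint_singleton.mpr hab) (measurableSet_singleton b),
        Measure.restrict_singleton, Measure.restrict_singleton]

theorem ProbabilityMeasure.integral_eq_zero_of_tendsto_s2 {X : Type*} [TopologicalSpace X]
    [MeasurableSpace X] [OpensMeasurableSpace X] {E : Type*} [NormedAddCommGroup E]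
    [InnerProductSpace ℝ E] [CompleteSpace E] [MeasurableSpace E] [BorelSpace E]
    [SecondCountableTopology E] {ι : Type*} {L : Filter ι} [L.NeBot]
    {μs : ι → ProbabilityMeasure X} {ν : ProbabilityMeasure X} (hμ : Tendsto μs L (𝓝 ν))
    (f : X →ᵇ E) (hf : ∀ i, ∫ x, f x ∂(μs i : Measure X) = 0) :
    ∫ x, f x ∂(ν : Measure X) = 0 := by
  set v := ∫ x, f x ∂(ν : Measure X)
  let g : X →ᵇ ℝ := f.comp (innerSL ℝ v) (innerSL ℝ v).lipschitz
  have hg (μ : Measure X) [IsFiniteMeasure μ] : ∫ x, g x ∂μ = ⟪v, ∫ x, f x ∂μ⟫ :=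
    integral_inner (f.integrable μ) v
  have hlim := ProbabilityMeasure.tendsto_iff_forall_integral_tendsto.mp hμ g
  simp only [hg, hf, inner_zero_right] at hlim
  exact inner_self_eq_zero.mp (tendsto_nhds_unique hlim tendsto_const_nhds)

theorem ProbabilityMeasure.le_measure_closedBall_of_tendsto {X : Type*} [PseudoMetricSpace X]
    [MeasurableSpace X] [OpensMeasurableSpace X] {ι : Type*} {L : Filter ι} [L.NeBot]
    {μs : ι → ProbabilityMeasure X} {ν : ProbabilityMeasure X} (hμ : Tendsto μs L (𝓝 ν))
    {p : ι → X} {a : X} (hp : Tendsto p L (𝓝 a)) {r : ι → ℝ} (hr : Tendsto r L (𝓝 0))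
    {m : ℝ≥0∞} (hm : m ≤ liminf (fun i => (μs i : Measure X) (closedBall (p i) (r i))) L)
    {δ : ℝ} (hδ : 0 < δ) : m ≤ (ν : Measure X) (closedBall a δ) := by
  have h_sub : ∀ᶠ i in L, closedBall (p i) (r i) ⊆ closedBall a δ := by
    filter_upwards [(tendsto_iff_dist_tendsto_zero.mp hp).eventually_lt_const (half_pos hδ),
      hr.eventually_lt_const (half_pos hδ)] with i hpi hri
    exact closedBall_subset_closedBall' (by linarith)
  calc m ≤ liminf (fun i => (μs i : Measure X) (closedBall (p i) (r i))) L := hm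
    _ ≤ liminf (fun i => (μs i : Measure X) (closedBall a δ)) L :=
      liminf_le_liminf (h_sub.mono fun i hi => measure_mono hi)
    _ ≤ limsup (fun i => (μs i : Measure X) (closedBall a δ)) L := liminf_le_limsup
    _ ≤ (ν : Measure X) (closedBall a δ) :=
      ProbabilityMeasure.limsup_measure_closed_le_of_tendsto hμ isClosed_closedBall

theorem le_measure_singleton_of_forall_le_measure_closedBall {X : Type*} [MetricSpace X]
    [MeasurableSpace X] [OpensMeasurableSpace X] {μ : Measure X} [IsFiniteMeasure μ] {a : X}
    {m : ℝ≥0∞} (h : ∀ δ > 0, m ≤ μ (closedBall a δ)) : m ≤ μ {a} := by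
  have h_lim := tendsto_measure_cthickening_of_isClosed (μ := μ)
    ⟨1, one_pos, measure_ne_top _ _⟩ (isClosed_singleton (x := a))
  refine ge_of_tendsto (h_lim.mono_left (nhdsWithin_le_nhds (s := Set.Ioi 0))) ?_
  filter_upwards [self_mem_nhdsWithin] with δ (hδ : 0 < δ)
  rw [cthickening_singleton a hδ.le]
  exact h δ hδ

section Sphere

variable {E : Type*} [NormedAddCommGroup E] [MeasurableSpace E] [BorelSpace E]
  [SecondCountableTopology E]

lemma integrable_coe_sphere (μ : Measure (sphere (0 : E) 1)) [IsFiniteMeasure μ] :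
    Integrable (fun x : sphere (0 : E) 1 => (x : E)) μ :=
  (integrable_const (1 : ℝ)).mono' continuous_subtype_val.aestronglyMeasurable
    (ae_of_all _ fun x => by simp)

variable [InnerProductSpace ℝ E] [CompleteSpace E]

lemma measureReal_singleton_eq_half_and_ae_eq_neg (μ : Measure (sphere (0 : E) 1))
    [IsProbabilityMeasure μ] (hbary : ∫ x, (x : E) ∂μ = 0) {a : sphere (0 : E) 1}
    (ha : 1 / 2 ≤ μ.real {a}) :
    μ.real {a} = 1 / 2 ∧ ∀ᵐ x ∂μ, x ≠ a → (x : E) = -a := by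
  have ha1 : ‖(a : E)‖ = 1 := by simp
  set h : sphere (0 : E) 1 → ℝ := fun x => 1 + ⟪(a : E), x⟫
  have h_nonneg (x : sphere (0 : E) 1) : 0 ≤ h x := by
    have := neg_le_of_abs_le (abs_real_inner_le_norm (a : E) x)
    simp only [ha1, norm_eq_of_mem_sphere, mul_one] at this
    simp only [h]
    linarith
  have h_int : Integrable h μ := (integrable_const 1).add ((integrable_coe_sphere μ).const_inner _)
  have h_mean : ∫ x, h x ∂μ = 1 := by
    simp only [h]
    rw [integral_add (integrable_const 1) ((integrable_coe_sphere μ).const_inner _),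
      integral_inner (integrable_coe_sphere μ), hbary]
    simp
  have h_split : 2 * μ.real {a} + ∫ x in {a}ᶜ, h x ∂μ = 1 := by
    have h_at_a : h a = 2 := by norm_num [h, real_inner_self_eq_norm_sq, ha1]
    have := integral_add_compl (measurableSet_singleton a) h_int
    rwa [integral_singleton, h_at_a, smul_eq_mul, mul_comm, h_mean] at this
  have h_off_nonneg : 0 ≤ ∫ x in {a}ᶜ, h x ∂μ := setIntegral_nonneg
    (measurableSet_singleton a).compl fun x _ => h_nonneg x
  have h_off : ∫ x in {a}ᶜ, h x ∂μ = 0 := by linarith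
  refine ⟨by linarith, ?_⟩
  have h_ae := (setIntegral_eq_zero_iff_of_nonneg_ae (ae_of_all _ h_nonneg)
    h_int.integrableOn).mp h_off
  filter_upwards [(ae_restrict_iff' (measurableSet_singleton a).compl).mp h_ae] with x hx hxa
  have hinner : ⟪(a : E), x⟫ = -1 := by
    have := hx hxa
    simp only [h, Pi.zero_apply] at this
    linarith
  rw [(inner_eq_neg_one_iff_of_norm_eq_one ha1 (by simp)).mp hinner, neg_neg]

theorem eq_half_dirac_add_half_dirac_of_integral_coe_eq_zero (μ : Measure (sphere (0 : E) 1))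
    [IsProbabilityMeasure μ] (hbary : ∫ x, (x : E) ∂μ = 0) {a b : sphere (0 : E) 1}
    (hb : (b : E) = -a) (ha : 1 / 2 ≤ μ {a}) :
    μ = (1 / 2 : ℝ≥0∞) • Measure.dirac a + (1 / 2 : ℝ≥0∞) • Measure.dirac b := by
  have hab : a ≠ b := fun h => ne_zero_of_mem_sphere one_ne_zero a <| by
    linear_combination (norm := module) (1 / 2 : ℝ) • (congrArg Subtype.val h).trans hb
  have ha' : 1 / 2 ≤ μ.real {a} := by
    simpa [measureReal_def] using ENNReal.toReal_mono (measure_ne_top μ {a}) ha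
  obtain ⟨h_half, h_ae⟩ := measureReal_singleton_eq_half_and_ae_eq_neg μ hbary ha'
  have h_supp : ∀ᵐ x ∂μ, x = a ∨ x = b := h_ae.mono fun x hx => by
    by_cases hxa : x = a
    · exact .inl hxa
    · exact .inr (Subtype.ext ((hx hxa).trans hb.symm))
  have hμa : μ {a} = 1 / 2 := by
    rw [← ofReal_measureReal, h_half]; simp
  have hμb : μ {b} = 1 / 2 := by
    have h_compl : ({a}ᶜ : Set (sphere (0 : E) 1)) =ᵐ[μ] ({b} : Set (sphere (0 : E) 1)) :=
      h_supp.mono fun x hx => by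
        change (x ∈ ({a}ᶜ : Set _)) = (x ∈ ({b} : Set _))
        rcases hx with rfl | rfl <;> simp [hab, hab.symm]
    rw [← measure_congr h_compl, prob_compl_eq_one_sub (measurableSet_singleton a), hμa,
      one_div, ENNReal.one_sub_inv_two]
  rw [Measure.eq_smul_dirac_add_smul_dirac_of_ae h_supp hab, hμa, hμb]

end Sphere

end MeasureTheory

/-- If barycentered probability measures `μ_k` on `S²` converge weakly to `ν`, and almost
half of the mass of `μ_k` concentrates on closed balls `B(p_k, r_k)` with `p_k → a` and
`r_k → 0`, then `ν = (1/2) δ_a + (1/2) δ_{-a}`. -/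
theorem limit_of_concentrating_barycentered_sequence
    (μk : ℕ → ProbabilityMeasure S2) (hbc : ∀ k, IsBarycentered (μk k))
    (ν : ProbabilityMeasure S2) (hν : Tendsto μk atTop (𝓝 ν))
    (p : ℕ → S2) (a : S2) (hp : Tendsto p atTop (𝓝 a))
    (r : ℕ → ℝ) (hr : Tendsto r atTop (𝓝 0))
    (ε : ℕ → ℝ) (hε : Tendsto ε atTop (𝓝 0))
    (hmass : ∀ k, ENNReal.ofReal (1 / 2 - ε k) ≤
      (μk k : Measure S2) (Metric.closedBall (p k) (r k))) :
    (ν : Measure S2) =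
      (1 / 2 : ℝ≥0∞) • Measure.dirac a + (1 / 2 : ℝ≥0∞) • Measure.dirac (antipode a) := by
  have hbary : ∫ x : S2, (x : E3) ∂(ν : Measure S2) = 0 :=
    ProbabilityMeasure.integral_eq_zero_of_tendsto_s2 hν
      (BoundedContinuousFunction.mkOfCompact ⟨Subtype.val, continuous_subtype_val⟩)
      fun k => (hbc k).2
  have hliminf : (1 / 2 : ℝ≥0∞) ≤
      liminf (fun k => (μk k : Measure S2) (closedBall (p k) (r k))) atTop := by
    have h_lower : Tendsto (fun k => ENNReal.ofReal (1 / 2 - ε k)) atTop (𝓝 (1 / 2)) := by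
      simpa using ENNReal.tendsto_ofReal (tendsto_const_nhds (x := (1 / 2 : ℝ)) |>.sub hε)
    rw [← h_lower.liminf_eq]
    exact liminf_le_liminf (Eventually.of_forall hmass)
  have hatom : (1 / 2 : ℝ≥0∞) ≤ (ν : Measure S2) {a} :=
    le_measure_singleton_of_forall_le_measure_closedBall fun δ hδ =>
      ProbabilityMeasure.le_measure_closedBall_of_tendsto hν hp hr hliminf hδ
  exact eq_half_dirac_add_half_dirac_of_integral_coe_eq_zero _ hbary rfl hatom
end
end

section
/- Every Borel probability measure ν on S² lying in the closure, in the topology of weak convergence, of the set of barycentered probability measures is either itself barycentered or of the form ν = (1/2)δ_a + (1/2)δ_{−a} for some a ∈ S². -/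
noncomputable section

open MeasureTheory Filter Topology
open scoped ENNReal

/-! Having mean zero is a closed condition in the weak topology, since it is tested against the
bounded continuous functions `x ↦ ⟪c, x⟫`; so a limit `ν` of barycentered measures has mean zero
and only the atom condition can fail. If `ν {a} ≥ 1/2`, consider `g = 1 + ⟪a, ·⟫ ≥ 0`: it has
`ν`-integral `1`, equals `2` at `a` and vanishes on `S²` only at `-a`. Hence
`1 = ∫ g dν ≥ 2 ν {a} ≥ 1`, which forces `ν {a} = 1/2` and `g = 0` `ν`-a.e. off `a`, so `ν` is
carried by `{a, -a}`. -/

open scoped RealInnerProductSpace BoundedContinuousFunction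

theorem MeasureTheory.ProbabilityMeasure.isClosed_setOf_integral_eq {X : Type*}
    [TopologicalSpace X] [MeasurableSpace X] [OpensMeasurableSpace X] {E : Type*}
    [NormedAddCommGroup E] [InnerProductSpace ℝ E] [CompleteSpace E] [SecondCountableTopology E]
    (f : X →ᵇ E) (v : E) :
    IsClosed {μ : ProbabilityMeasure X | ∫ x, f x ∂μ = v} := by
  have hf (μ : ProbabilityMeasure X) : Integrable f μ :=
    .of_bound f.continuous.aestronglyMeasurable ‖f‖ (ae_of_all _ f.norm_coe_le_norm)
  have hset : {μ : ProbabilityMeasure X | ∫ x, f x ∂μ = v} = ⋂ c : E,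
      {μ : ProbabilityMeasure X | ∫ x, (innerSL ℝ c).compLeftContinuousBounded X f x ∂μ =
        ⟪c, v⟫} := by
    ext μ
    simp only [Set.mem_ofPred_eq, Set.mem_iInter,
      ContinuousLinearMap.compLeftContinuousBounded_apply, innerSL_apply_apply,
      integral_inner (hf μ)]
    exact ⟨fun h c => h ▸ rfl, ext_inner_left ℝ⟩
  rw [hset]
  exact isClosed_iInter fun c =>
    isClosed_eq (ProbabilityMeasure.continuous_integral_boundedContinuousFunction _)
      continuous_const

theorem MeasureTheory.Measure.eq_smul_dirac_add_smul_dirac {X : Type*} [MeasurableSpace X]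
    [MeasurableSingletonClass X] {μ : Measure X} {a b : X} (hab : a ≠ b)
    (h : ∀ᵐ x ∂μ, x = a ∨ x = b) :
    μ = μ {a} • Measure.dirac a + μ {b} • Measure.dirac b := by
  calc μ = μ.restrict ({a} ∪ {b}) := (Measure.restrict_eq_self_of_ae_mem h).symm
    _ = μ.restrict {a} + μ.restrict {b} :=
      Measure.restrict_union (Set.disjoint_singleton.2 hab) (measurableSet_singleton b)
    _ = _ := by rw [Measure.restrict_singleton, Measure.restrict_singleton]

namespace S2

lemma norm_coe (x : S2) : ‖(x : E3)‖ = 1 := norm_eq_of_mem_sphere x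

lemma inner_self_coe (a : S2) : ⟪(a : E3), a⟫ = 1 := by
  rw [real_inner_self_eq_norm_sq, norm_coe, one_pow]

lemma neg_one_le_inner (a x : S2) : -1 ≤ ⟪(a : E3), x⟫ :=
  neg_one_le_real_inner_of_norm_eq_one (norm_coe a) (norm_coe x)

lemma inner_eq_neg_one_iff (a x : S2) : ⟪(a : E3), x⟫ = -1 ↔ x = antipode a := by
  rw [real_inner_comm, inner_eq_neg_one_iff_of_norm_eq_one (norm_coe x) (norm_coe a),
    Subtype.ext_iff]
  rfl

lemma antipode_ne_self (a : S2) : antipode a ≠ a := fun h => by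
  linarith [inner_self_coe a, (inner_eq_neg_one_iff a a).mpr h.symm]

def coeBCF : S2 →ᵇ E3 :=
  BoundedContinuousFunction.mkOfCompact ⟨Subtype.val, continuous_subtype_val⟩

lemma integrable_coe (μ : Measure S2) [IsFiniteMeasure μ] :
    Integrable (fun x : S2 => (x : E3)) μ :=
  coeBCF.integrable μ

lemma isClosed_setOf_integral_coe_eq_zero :
    IsClosed {μ : ProbabilityMeasure S2 | ∫ x, (x : E3) ∂(μ : Measure S2) = 0} :=
  ProbabilityMeasure.isClosed_setOf_integral_eq coeBCF 0

lemma measureReal_singleton_eq_half_and_ae_eq_or_eq_antipode {μ : Measure S2}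
    [IsProbabilityMeasure μ] (hmean : ∫ x, (x : E3) ∂μ = 0) {a : S2} (ha : 1 / 2 ≤ μ {a}) :
    μ.real {a} = 1 / 2 ∧ ∀ᵐ x ∂μ, x = a ∨ x = antipode a := by
  set g : S2 → ℝ := fun x => 1 + ⟪(a : E3), x⟫
  have hg_nonneg (x : S2) : 0 ≤ g x := by linarith [neg_one_le_inner a x]
  have hg_int : Integrable g μ := (integrable_const 1).add ((integrable_coe μ).const_inner _)
  have hg_total : ∫ x, g x ∂μ = 1 := by
    rw [integral_add (integrable_const 1) ((integrable_coe μ).const_inner _),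
      integral_inner (integrable_coe μ), hmean]
    simp
  have hg_a : g a = 2 := by simp only [g, inner_self_coe]; norm_num
  have hsplit := integral_add_compl (measurableSet_singleton a) hg_int
  rw [integral_singleton, hg_a, hg_total, smul_eq_mul] at hsplit
  have ha_real : 1 / 2 ≤ μ.real {a} := by
    simpa [measureReal_def] using ENNReal.toReal_mono (measure_ne_top μ {a}) ha
  have hcompl_nonneg : 0 ≤ ∫ x in {a}ᶜ, g x ∂μ :=
    setIntegral_nonneg (measurableSet_singleton a).compl fun x _ => hg_nonneg x
  have hcompl : ∫ x in {a}ᶜ, g x ∂μ = 0 := by linarith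
  refine ⟨by linarith, ?_⟩
  have hg_zero : g =ᵐ[μ.restrict {a}ᶜ] 0 :=
    (setIntegral_eq_zero_iff_of_nonneg_ae (ae_of_all _ hg_nonneg) hg_int.integrableOn).mp hcompl
  rw [Filter.EventuallyEq, ae_restrict_iff' (measurableSet_singleton a).compl] at hg_zero
  filter_upwards [hg_zero] with x hx
  by_cases hxa : x = a
  · exact Or.inl hxa
  · exact Or.inr <| (inner_eq_neg_one_iff a x).mp <| by
      simpa [g, add_eq_zero_iff_eq_neg'] using hx hxa

theorem eq_half_dirac_add_half_dirac_antipode {μ : Measure S2} [IsProbabilityMeasure μ]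
    (hmean : ∫ x, (x : E3) ∂μ = 0) {a : S2} (ha : 1 / 2 ≤ μ {a}) :
    μ = (1 / 2 : ℝ≥0∞) • Measure.dirac a + (1 / 2 : ℝ≥0∞) • Measure.dirac (antipode a) := by
  obtain ⟨ha_half, hae⟩ := measureReal_singleton_eq_half_and_ae_eq_or_eq_antipode hmean ha
  have hμ := Measure.eq_smul_dirac_add_smul_dirac (antipode_ne_self a).symm hae
  have hμa : μ {a} = 1 / 2 := by
    rw [← ENNReal.toReal_eq_toReal_iff' (measure_ne_top _ _) (by norm_num), ← measureReal_def,
      ha_half]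
    norm_num
  have hμb : μ {antipode a} = 1 / 2 := by
    have htotal := congrArg (fun ν : Measure S2 => ν Set.univ) hμ
    simp only [Measure.add_apply, Measure.smul_apply, measure_univ, smul_eq_mul, mul_one,
      hμa] at htotal
    have hsum : (1 / 2 : ℝ≥0∞) + μ {antipode a} = 1 / 2 + 1 / 2 := by
      rw [ENNReal.add_halves]
      exact htotal.symm
    exact (ENNReal.add_right_inj (by norm_num)).mp hsum
  rwa [hμa, hμb] at hμ

end S2

/-- Every probability measure in the weak closure of the set of barycentered probability
measures on `S²` is either itself barycentered or equal to `(1/2) δ_a + (1/2) δ_{-a}`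
for some `a ∈ S²`. -/
theorem mem_closure_barycentered
    (ν : ProbabilityMeasure S2)
    (hν : ν ∈ closure {μ : ProbabilityMeasure S2 | IsBarycentered μ}) :
    IsBarycentered ν ∨ ∃ a : S2,
      (ν : Measure S2) =
        (1 / 2 : ℝ≥0∞) • Measure.dirac a + (1 / 2 : ℝ≥0∞) • Measure.dirac (antipode a) := by
  have hmean : ∫ x, (x : E3) ∂(ν : Measure S2) = 0 :=
    closure_minimal (fun μ hμ => hμ.2) S2.isClosed_setOf_integral_coe_eq_zero hν
  by_cases hatoms : ∀ x : S2, (ν : Measure S2) {x} < 1 / 2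
  · exact Or.inl ⟨hatoms, hmean⟩
  obtain ⟨a, ha⟩ := not_forall.mp hatoms
  exact Or.inr ⟨a, S2.eq_half_dirac_add_half_dirac_antipode hmean (not_lt.mp ha)⟩
end
end

section
/- Let d ≥ 2 be even and let f be a degree-d pair with f ∉ I(d); then f^n is a nonzero pair for every n ≥ 1. Moreover, f^n is stable for every n ≥ 1 if and only if d_h(f^n) ≤ d^n/2 for every n ≥ 1 and every h ∈ ℙ¹(ℂ). -/
noncomputable section

open MvPolynomial

/-- Polynomials in the two variables `z = X 0` and `w = X 1` over `ℂ`. -/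
abbrev MvPoly2 : Type := MvPolynomial (Fin 2) ℂ

/-- A pair of polynomials, representing a point of `Ratbar_d` when both entries are
homogeneous of degree `d` and not both zero. -/
abbrev Pair : Type := MvPoly2 × MvPoly2

/-- `f` is a degree-`d` pair: both entries homogeneous of degree `d`, not both zero. -/
def IsDegPair (d : ℕ) (f : Pair) : Prop :=
  f.1.IsHomogeneous d ∧ f.2.IsHomogeneous d ∧ f ≠ 0

/-- Composition of pairs: substitute the components of `g` into `f`. -/
def comp (f g : Pair) : Pair :=
  (aeval ![g.1, g.2] f.1, aeval ![g.1, g.2] f.2)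

/-- The identity pair `(z, w)`. -/
def idPair : Pair := (X 0, X 1)

/-- Iterates: `iter f n = f^n`, the `n`-fold self-composition, with `f^0` the identity. -/
def iter (f : Pair) : ℕ → Pair
  | 0 => idPair
  | n + 1 => comp f (iter f n)

/-- The linear form `β z - α w` vanishing at the point `(α : β)` of `ℙ¹`. -/
def linForm (v : ℂ × ℂ) : MvPoly2 := C v.2 * X 0 - C v.1 * X 1

/-- Order of vanishing of the linear form of `v` in a polynomial `P`. -/
def ord (v : ℂ × ℂ) (P : MvPoly2) : ℕ := sSup {n : ℕ | linForm v ^ n ∣ P}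

/-- Depth of `v` as a hole of `f`: the multiplicity of `linForm v` in `gcd (f.1, f.2)`. -/
def depth (v : ℂ × ℂ) (f : Pair) : ℕ :=
  sSup {n : ℕ | linForm v ^ n ∣ f.1 ∧ linForm v ^ n ∣ f.2}

/-- The homogeneous form `z Q - w P`, whose vanishing at `v` beyond the depth of the
hole detects that the reduced map fixes `v`. -/
def fixedForm (f : Pair) : MvPoly2 := X 0 * f.2 - X 1 * f.1

/-- `φ_f(v) = v` in the sense of the paper: the multiplicity of `v` as a root of
`z Q - w P` strictly exceeds the depth of `v` as a hole of `f`. -/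
def FixedHole (v : ℂ × ℂ) (f : Pair) : Prop := depth v f < ord v (fixedForm f)

/-- Stability with cutoff `m`: all holes have depth at most `m` and no hole of depth
exactly `m` is fixed by the reduced map. -/
def StableAt (m : ℕ) (f : Pair) : Prop :=
  f ≠ 0 ∧ ∀ v : ℂ × ℂ, v ≠ 0 →
    depth v f ≤ m ∧ (0 < depth v f → depth v f = m → ¬ FixedHole v f)

/-- GIT stability of a degree-`d` pair. -/
def Stable (d : ℕ) (f : Pair) : Prop :=
  if d % 2 = 0 then StableAt (d / 2) f else StableAt ((d - 1) / 2) f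

/-- GIT semistability of a degree-`d` pair. -/
def Semistable (d : ℕ) (f : Pair) : Prop :=
  if d % 2 = 0 then StableAt (d / 2) f else StableAt ((d + 1) / 2) f

/-- The indeterminacy locus: `f ∈ I(d)` iff `f ∘ f` is the zero pair. -/
def IsIndet (f : Pair) : Prop := comp f f = 0

/-- The degree-1 pair `(az + bw, cz + dw)` associated to a `2 × 2` matrix. -/
def matPair (A : Matrix (Fin 2) (Fin 2) ℂ) : Pair :=
  (C (A 0 0) * X 0 + C (A 0 1) * X 1, C (A 1 0) * X 0 + C (A 1 1) * X 1)

/-- Conjugacy of pairs: `g` is a nonzero scalar multiple of `A ∘ f ∘ A⁻¹` for some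
`A ∈ GL₂(ℂ)`. -/
def Conjugate (f g : Pair) : Prop :=
  ∃ A : Matrix.GeneralLinearGroup (Fin 2) ℂ, ∃ c : ℂ, c ≠ 0 ∧
    g = c • comp (matPair (A : Matrix (Fin 2) (Fin 2) ℂ))
        (comp f (matPair ((A⁻¹ : Matrix.GeneralLinearGroup (Fin 2) ℂ) : Matrix (Fin 2) (Fin 2) ℂ)))

/-! If the reduced map of `f` is nonconstant, so is that of every iterate: were `f ∘ g = H · v`,
the nonzero binary form `v₂ f₁ - v₁ f₂` would vanish at `(g₁, g₂)`, making `g₁ / g₂` algebraic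
over `ℂ`, hence a constant. If instead `f = h · v`, then `f^(n+1) = H · v` with `H ≠ 0`, because
`h(v) ≠ 0` is exactly `f ∉ I(d)`. Hence no iterate vanishes.

For even degree, stability of `f^n` can only fail at a hole `v` of depth `k = d^n / 2` fixed by
the reduced map. Writing `F = f^n = L^k (A, B)` with `L` the linear form of `v`, homogeneity gives
`F ∘ F = L^(k d^n) · (F(A, B))`, and `F(A, B) = L(A, B)^k · (A(A, B), B(A, B))` where `L ∣ L(A, B)`
because the reduced map `(A : B)` fixes `v`. So `f^(2n)` has depth at least `k (d^n + 1)`, which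
exceeds `d^(2n) / 2 = 2 k²`. -/

theorem MvPolynomial.IsHomogeneous.aeval_smul {σ R A : Type*} [CommSemiring R] [CommSemiring A]
    [Algebra R A] {P : MvPolynomial σ R} {m : ℕ} (hP : P.IsHomogeneous m) (c : A) (x : σ → A) :
    MvPolynomial.aeval (c • x) P = c ^ m * MvPolynomial.aeval x P := by
  simp only [aeval_def, eval₂_eq, Finset.mul_sum]
  refine Finset.sum_congr rfl fun s hs => ?_
  simp only [Pi.smul_apply, smul_eq_mul, mul_pow, Finset.prod_mul_distrib,
    Finset.prod_pow_eq_pow_sum, ← hP.degree_eq_sum_deg_support hs]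
  ring

theorem IsAlgClosed.mem_range_algebraMap_of_aeval_eq_zero {k K : Type*} [Field k] [IsAlgClosed k]
    [Field K] [Algebra k K] {q : Polynomial k} (hq : q ≠ 0) {t : K}
    (ht : Polynomial.aeval t q = 0) : t ∈ (algebraMap k K).range :=
  minpoly.mem_range_of_degree_eq_one k t <| IsAlgClosed.degree_eq_one_of_irreducible k <|
    minpoly.irreducible (IsAlgebraic.isIntegral ⟨q, hq, ht⟩)

section TwoVariables

variable {A B : Type*} [CommRing A] [Algebra ℂ A] [CommRing B] [Algebra ℂ B]

theorem AlgHom.map_aeval_vec₂ (φ : A →ₐ[ℂ] B) (a b : A) (P : MvPoly2) :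
    φ (aeval ![a, b] P) = aeval ![φ a, φ b] P := by
  rw [comp_aeval_apply]
  congr 2
  funext i
  fin_cases i <;> rfl

theorem MvPolynomial.IsHomogeneous.aeval_vec₂_mul {P : MvPoly2} {m : ℕ} (hP : P.IsHomogeneous m)
    (c a b : A) :
    MvPolynomial.aeval ![c * a, c * b] P = c ^ m * MvPolynomial.aeval ![a, b] P := by
  rw [← hP.aeval_smul]
  congr 2
  funext i
  fin_cases i <;> rfl

theorem aeval_vec₂_C (P : MvPoly2) (a b : ℂ) :
    aeval ![(C a : MvPoly2), C b] P = C (aeval ![a, b] P) := by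
  simpa using ((Algebra.ofId ℂ MvPoly2).map_aeval_vec₂ a b P).symm

theorem aeval_vec₂_linForm (v : ℂ × ℂ) (a b : MvPoly2) :
    aeval ![a, b] (linForm v) = C v.2 * a - C v.1 * b := by
  simp [linForm, algebraMap_eq]

theorem exists_eq_algebraMap_mul_of_aeval_eq_zero [IsDomain A] {P : MvPoly2} {m : ℕ}
    (hP : P.IsHomogeneous m) (hP0 : P ≠ 0) {a b : A} (hb : b ≠ 0) (h : aeval ![a, b] P = 0) :
    ∃ r : ℂ, a = algebraMap ℂ A r * b := by
  let ι := IsScalarTower.toAlgHom ℂ A (FractionRing A)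
  have hι : Function.Injective ι := IsFractionRing.injective A (FractionRing A)
  have hb' : ι b ≠ 0 := (map_ne_zero_iff ι hι).mpr hb
  set t := ι a / ι b
  have ht : aeval ![t, 1] P = 0 := by
    have : ι b ^ m * aeval ![t, 1] P = 0 := by
      rw [← hP.aeval_vec₂_mul, mul_one, mul_div_cancel₀ _ hb', ← ι.map_aeval_vec₂, h, map_zero]
    exact (mul_eq_zero.mp this).resolve_left (pow_ne_zero _ hb')
  have hq : aeval ![(Polynomial.X : Polynomial ℂ), 1] P ≠ 0 := fun h0 =>
    hP0 (by rw [← Polynomial.homogenize_eq_of_isHomogeneous hP h0, Polynomial.homogenize_zero])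
  have hqt : Polynomial.aeval t (aeval ![(Polynomial.X : Polynomial ℂ), 1] P) = 0 := by
    rwa [AlgHom.map_aeval_vec₂, Polynomial.aeval_X, map_one]
  obtain ⟨r, hr⟩ := IsAlgClosed.mem_range_algebraMap_of_aeval_eq_zero hq hqt
  refine ⟨r, hι ?_⟩
  rw [map_mul, AlgHom.commutes, hr, div_mul_cancel₀ _ hb']

end TwoVariables

def constPair (v : ℂ × ℂ) (h : MvPoly2) : Pair := (C v.1 * h, C v.2 * h)

/-- The reduced map of `g` is constant; the zero pair counts as constant. -/
def IsConstPair (g : Pair) : Prop := ∃ v : ℂ × ℂ, v ≠ 0 ∧ ∃ h, g = constPair v h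

theorem constPair_ne_zero {v : ℂ × ℂ} (hv : v ≠ 0) {h : MvPoly2} (hh : h ≠ 0) :
    constPair v h ≠ 0 := by
  intro h0
  have h1 : C v.1 * h = 0 := congrArg Prod.fst h0
  have h2 : C v.2 * h = 0 := congrArg Prod.snd h0
  simp only [mul_eq_zero, C_eq_zero, hh, or_false] at h1 h2
  exact hv (Prod.ext h1 h2)

theorem isConstPair_zero : IsConstPair 0 :=
  ⟨(1, 0), by simp, 0, by simp [constPair]; rfl⟩

theorem exists_eq_constPair_of_C_mul_eq {v : ℂ × ℂ} (hv : v ≠ 0) {p q : MvPoly2}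
    (h : C v.2 * p = C v.1 * q) : ∃ h₀, (p, q) = constPair v h₀ := by
  have cancel : ∀ {a : ℂ}, a ≠ 0 → ∀ r : MvPoly2, C a * (C a⁻¹ * r) = r := fun ha r => by
    rw [← mul_assoc, ← map_mul, mul_inv_cancel₀ ha, map_one, one_mul]
  by_cases hv1 : v.1 = 0
  · have hv2 : v.2 ≠ 0 := fun h2 => hv (Prod.ext hv1 h2)
    refine ⟨C v.2⁻¹ * q, Prod.ext ?_ (cancel hv2 q).symm⟩
    simpa [constPair, hv1, hv2] using h
  · refine ⟨C v.1⁻¹ * p, Prod.ext (cancel hv1 p).symm ?_⟩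
    apply mul_left_cancel₀ (C_ne_zero.mpr hv1)
    simp only [constPair]
    rw [← h, mul_left_comm, cancel hv1]

theorem isConstPair_of_aeval_eq_zero {P : MvPoly2} {m : ℕ} (hP : P.IsHomogeneous m)
    (hP0 : P ≠ 0) {g : Pair} (hg : aeval ![g.1, g.2] P = 0) : IsConstPair g := by
  by_cases hg2 : g.2 = 0
  · exact ⟨(1, 0), by simp, g.1, Prod.ext (by simp [constPair]) (by simp [constPair, hg2])⟩
  · obtain ⟨r, hr⟩ := exists_eq_algebraMap_mul_of_aeval_eq_zero hP hP0 hg2 hg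
    exact ⟨(r, 1), by simp, g.2, Prod.ext (by simpa [constPair] using hr) (by simp [constPair])⟩

theorem aeval_constPair {P : MvPoly2} {m : ℕ} (hP : P.IsHomogeneous m) (v : ℂ × ℂ) (H : MvPoly2) :
    aeval ![(constPair v H).1, (constPair v H).2] P = H ^ m * C (aeval ![v.1, v.2] P) := by
  rw [← aeval_vec₂_C, ← hP.aeval_vec₂_mul, constPair, mul_comm _ H, mul_comm _ H]

theorem comp_constPair_constPair {v : ℂ × ℂ} {h : MvPoly2} {d : ℕ}
    (h1 : (constPair v h).1.IsHomogeneous d) (h2 : (constPair v h).2.IsHomogeneous d)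
    (H : MvPoly2) :
    comp (constPair v h) (constPair v H) = constPair v (C (aeval ![v.1, v.2] h) * H ^ d) := by
  refine Prod.ext ?_ ?_
  · rw [comp, aeval_constPair h1]
    simp only [constPair, map_mul, aeval_C, Algebra.algebraMap_self, RingHom.id_apply]
    ring
  · rw [comp, aeval_constPair h2]
    simp only [constPair, map_mul, aeval_C, Algebra.algebraMap_self, RingHom.id_apply]
    ring

theorem comp_idPair (f : Pair) : comp f idPair = f := by
  have h : (![X 0, X 1] : Fin 2 → MvPoly2) = X := by
    funext i; fin_cases i <;> rfl
  simp [comp, idPair, h]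

theorem iter_one (f : Pair) : iter f 1 = f := comp_idPair f

theorem not_isConstPair_comp {d : ℕ} {f g : Pair} (hf1 : f.1.IsHomogeneous d)
    (hf2 : f.2.IsHomogeneous d) (hf : ¬IsConstPair f) (hg : ¬IsConstPair g) :
    ¬IsConstPair (comp f g) := by
  rintro ⟨v, hv, H, hfg⟩
  have hR0 : C v.2 * f.1 - C v.1 * f.2 ≠ 0 := fun hR =>
    hf ⟨v, hv, exists_eq_constPair_of_C_mul_eq hv (sub_eq_zero.mp hR)⟩
  refine hg (isConstPair_of_aeval_eq_zero ((hf1.C_mul _).sub (hf2.C_mul _)) hR0 ?_)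
  have h1 : aeval ![g.1, g.2] f.1 = C v.1 * H := congrArg Prod.fst hfg
  have h2 : aeval ![g.1, g.2] f.2 = C v.2 * H := congrArg Prod.snd hfg
  simp only [map_sub, map_mul, aeval_C, algebraMap_eq, h1, h2]
  ring

theorem not_isConstPair_iter {d : ℕ} {f : Pair} (hf1 : f.1.IsHomogeneous d)
    (hf2 : f.2.IsHomogeneous d) (hf : ¬IsConstPair f) (n : ℕ) :
    ¬IsConstPair (iter f (n + 1)) := by
  induction n with
  | zero => rwa [iter_one]
  | succ n ih => exact not_isConstPair_comp hf1 hf2 hf ih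

theorem exists_iter_succ_eq_constPair {d : ℕ} {v : ℂ × ℂ} {h : MvPoly2}
    (h1 : (constPair v h).1.IsHomogeneous d) (h2 : (constPair v h).2.IsHomogeneous d)
    (hh : h ≠ 0) (hhv : aeval ![v.1, v.2] h ≠ 0) (n : ℕ) :
    ∃ H ≠ 0, iter (constPair v h) (n + 1) = constPair v H := by
  induction n with
  | zero => exact ⟨h, hh, iter_one _⟩
  | succ n ih =>
    obtain ⟨H, hH, hiter⟩ := ih
    refine ⟨_, mul_ne_zero (C_ne_zero.mpr hhv) (pow_ne_zero d hH), ?_⟩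
    rw [iter, hiter, comp_constPair_constPair h1 h2]

theorem iter_ne_zero {d : ℕ} {f : Pair} (hf1 : f.1.IsHomogeneous d) (hf2 : f.2.IsHomogeneous d)
    (hI : comp f f ≠ 0) (n : ℕ) : iter f n ≠ 0 := by
  cases n with
  | zero => exact fun h0 => X_ne_zero (R := ℂ) (0 : Fin 2) (congrArg Prod.fst h0)
  | succ n =>
    by_cases hconst : IsConstPair f
    · obtain ⟨v, hv, h, rfl⟩ := hconst
      have hhv : aeval ![v.1, v.2] h ≠ 0 := fun h0 => hI (by
        rw [comp_constPair_constPair hf1 hf2, h0, map_zero, zero_mul]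
        simp [constPair])
      have hh : h ≠ 0 := by
        rintro rfl
        simp at hhv
      obtain ⟨H, hH, hiter⟩ := exists_iter_succ_eq_constPair hf1 hf2 hh hhv n
      exact hiter ▸ constPair_ne_zero hv hH
    · exact fun h0 => not_isConstPair_iter hf1 hf2 hconst n (h0 ▸ isConstPair_zero)

theorem comp_assoc (f g h : Pair) : comp (comp f g) h = comp f (comp g h) := by
  refine Prod.ext ?_ ?_ <;> exact AlgHom.map_aeval_vec₂ (aeval ![h.1, h.2]) _ _ _

theorem iter_add (f : Pair) (m n : ℕ) : iter f (m + n) = comp (iter f m) (iter f n) := by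
  induction m with
  | zero => simp [iter, comp, idPair]
  | succ m ih => rw [Nat.add_right_comm, iter, ih, iter, comp_assoc]

theorem isHomogeneous_iter {d : ℕ} {f : Pair} (hf1 : f.1.IsHomogeneous d)
    (hf2 : f.2.IsHomogeneous d) (n : ℕ) :
    (iter f n).1.IsHomogeneous (d ^ n) ∧ (iter f n).2.IsHomogeneous (d ^ n) := by
  induction n with
  | zero => exact ⟨isHomogeneous_X ℂ 0, isHomogeneous_X ℂ 1⟩
  | succ n ih =>
    have hg : ∀ i, (![(iter f n).1, (iter f n).2] i).IsHomogeneous (d ^ n) := by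
      intro i; fin_cases i
      exacts [ih.1, ih.2]
    rw [pow_succ]
    exact ⟨hf1.aeval _ hg, hf2.aeval _ hg⟩

theorem linForm_isHomogeneous (v : ℂ × ℂ) : (linForm v).IsHomogeneous 1 :=
  ((isHomogeneous_X ℂ 0).C_mul v.2).sub ((isHomogeneous_X ℂ 1).C_mul v.1)

theorem aeval_eq_zero_of_linForm_dvd (v : ℂ × ℂ) {p : MvPoly2} (hp : linForm v ∣ p) :
    aeval ![v.1, v.2] p = 0 := by
  obtain ⟨q, rfl⟩ := hp
  simp [linForm, mul_comm]

theorem linForm_ne_zero {v : ℂ × ℂ} (hv : v ≠ 0) : linForm v ≠ 0 := by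
  intro h0
  have h1 := congrArg (aeval ![(1 : ℂ), 0]) h0
  have h2 := congrArg (aeval ![(0 : ℂ), 1]) h0
  simp [linForm] at h1 h2
  exact hv (Prod.ext h2 h1)

theorem linForm_prime {v : ℂ × ℂ} (hv : v ≠ 0) : Prime (linForm v) := by
  refine (irreducible_of_totalDegree_eq_one
    ((linForm_isHomogeneous v).totalDegree (linForm_ne_zero hv)) fun x hx => ?_).prime
  refine isUnit_iff_ne_zero.mpr fun hx0 => linForm_ne_zero hv ?_
  ext s
  simpa [hx0] using hx s

section Depth

variable {v : ℂ × ℂ} {f : Pair}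

theorem bddAbove_depth_set (hv : v ≠ 0) (hf : f ≠ 0) :
    BddAbove {n : ℕ | linForm v ^ n ∣ f.1 ∧ linForm v ^ n ∣ f.2} := by
  have bdd : ∀ {p : MvPoly2}, p ≠ 0 → BddAbove {n : ℕ | linForm v ^ n ∣ p} := fun hp => by
    obtain ⟨k, hk⟩ := FiniteMultiplicity.of_prime_left (linForm_prime hv) hp
    exact ⟨k, fun n hn => not_lt.mp fun hkn => hk ((pow_dvd_pow _ hkn).trans hn)⟩
  by_cases hf1 : f.1 = 0
  · exact (bdd fun hf2 => hf (Prod.ext hf1 hf2)).mono fun n hn => hn.2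
  · exact (bdd hf1).mono fun n hn => hn.1

theorem pow_depth_dvd (hv : v ≠ 0) (hf : f ≠ 0) :
    linForm v ^ depth v f ∣ f.1 ∧ linForm v ^ depth v f ∣ f.2 :=
  Nat.sSup_mem ⟨0, by simp⟩ (bddAbove_depth_set hv hf)

theorem le_depth (hv : v ≠ 0) (hf : f ≠ 0) {n : ℕ} (h1 : linForm v ^ n ∣ f.1)
    (h2 : linForm v ^ n ∣ f.2) : n ≤ depth v f :=
  le_csSup (bddAbove_depth_set hv hf) ⟨h1, h2⟩

theorem FixedHole.pow_succ_dvd (hfix : FixedHole v f) :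
    linForm v ^ (depth v f + 1) ∣ fixedForm f := by
  obtain ⟨n, hn, hlt⟩ := exists_lt_of_lt_csSup ⟨0, by simp⟩ hfix
  exact (pow_dvd_pow _ hlt).trans hn

end Depth

theorem linForm_dvd_aeval_linForm {v : ℂ × ℂ} (hv : v ≠ 0) {A B : MvPoly2}
    (hfix : linForm v ∣ fixedForm (A, B)) : linForm v ∣ aeval ![A, B] (linForm v) := by
  set L := linForm v
  set G := fixedForm (A, B)
  set D := aeval ![A, B] L
  have hD : D = C v.2 * A - C v.1 * B := aeval_vec₂_linForm v A B
  have h0 : L ∣ X 0 * D := by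
    have : X 0 * D = L * A - C v.1 * G := by simp only [hD, L, G, linForm, fixedForm]; ring
    exact this ▸ dvd_sub (dvd_mul_right _ _) (hfix.mul_left _)
  have h1 : L ∣ X 1 * D := by
    have : X 1 * D = L * B - C v.2 * G := by simp only [hD, L, G, linForm, fixedForm]; ring
    exact this ▸ dvd_sub (dvd_mul_right _ _) (hfix.mul_left _)
  have hX : ¬(L ∣ X 0 ∧ L ∣ X 1) := fun ⟨hX0, hX1⟩ => hv (Prod.ext
    (by simpa using aeval_eq_zero_of_linForm_dvd v hX0)
    (by simpa using aeval_eq_zero_of_linForm_dvd v hX1))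
  rcases (linForm_prime hv).dvd_mul.mp h0 with hX0 | hD0
  · exact ((linForm_prime hv).dvd_mul.mp h1).resolve_left fun hX1 => hX ⟨hX0, hX1⟩
  · exact hD0

theorem pow_dvd_comp_self_of_dvd_fixedForm {v : ℂ × ℂ} (hv : v ≠ 0) {F : Pair} {m k : ℕ}
    (hF1 : F.1.IsHomogeneous m) (hF2 : F.2.IsHomogeneous m) (h1 : linForm v ^ k ∣ F.1)
    (h2 : linForm v ^ k ∣ F.2) (hfix : linForm v ^ (k + 1) ∣ fixedForm F) :
    linForm v ^ (k * m + k) ∣ (comp F F).1 ∧ linForm v ^ (k * m + k) ∣ (comp F F).2 := by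
  set L := linForm v
  obtain ⟨A, hA⟩ := h1
  obtain ⟨B, hB⟩ := h2
  have hD : L ∣ aeval ![A, B] L := by
    refine linForm_dvd_aeval_linForm hv ((mul_dvd_mul_iff_left (pow_ne_zero k
      (linForm_ne_zero hv))).mp ?_)
    have : fixedForm F = L ^ k * fixedForm (A, B) := by
      simp only [fixedForm, hA, hB]; ring
    rwa [this, pow_succ] at hfix
  have key : ∀ {P Q : MvPoly2}, P.IsHomogeneous m → P = L ^ k * Q →
      L ^ (k * m + k) ∣ aeval ![F.1, F.2] P := by
    intro P Q hP hPQ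
    rw [hA, hB, hP.aeval_vec₂_mul, ← pow_mul, pow_add, hPQ, map_mul, map_pow]
    exact mul_dvd_mul_left _ (dvd_mul_of_dvd_left (pow_dvd_pow_of_dvd hD k) _)
  exact ⟨key hF1 hA, key hF2 hB⟩

theorem depth_mul_succ_le_depth_comp_self {v : ℂ × ℂ} (hv : v ≠ 0) {F : Pair} {m : ℕ}
    (hF1 : F.1.IsHomogeneous m) (hF2 : F.2.IsHomogeneous m) (hF : F ≠ 0)
    (hFF : comp F F ≠ 0) (hfix : FixedHole v F) :
    depth v F * m + depth v F ≤ depth v (comp F F) :=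
  have hdvd := pow_dvd_comp_self_of_dvd_fixedForm hv hF1 hF2 (pow_depth_dvd hv hF).1
    (pow_depth_dvd hv hF).2 hfix.pow_succ_dvd
  le_depth hv hFF hdvd.1 hdvd.2

theorem even_degree_all_iterates_stable_iff_general (d : ℕ) (hdeven : Even d)
    (f : Pair) (hf : IsDegPair d f) (hI : ¬ IsIndet f) :
    (∀ n : ℕ, 1 ≤ n → iter f n ≠ 0) ∧
    ((∀ n : ℕ, 1 ≤ n → Stable (d ^ n) (iter f n)) ↔
      ∀ n : ℕ, 1 ≤ n → ∀ v : ℂ × ℂ, v ≠ 0 → 2 * depth v (iter f n) ≤ d ^ n) := by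
  obtain ⟨hf1, hf2, -⟩ := hf
  have hne := iter_ne_zero hf1 hf2 hI
  have heven : ∀ n, 1 ≤ n → d ^ n % 2 = 0 := fun n hn =>
    Nat.even_iff.mp ((Nat.even_pow' (by omega)).mpr hdeven)
  refine ⟨fun n _ => hne n, fun hst n hn v hv => ?_, fun hbound n hn => ?_⟩
  · have hstable := hst n hn
    rw [Stable, if_pos (heven n hn)] at hstable
    have := (hstable.2 v hv).1
    have := heven n hn
    omega
  · rw [Stable, if_pos (heven n hn)]
    refine ⟨hne n, fun v hv => ⟨by have := hbound n hn v hv; omega, fun hpos hhalf hfix => ?_⟩⟩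
    obtain ⟨hF1, hF2⟩ := isHomogeneous_iter hf1 hf2 n
    have hgrow := depth_mul_succ_le_depth_comp_self hv hF1 hF2 (hne n)
      (iter_add f n n ▸ hne (n + n)) hfix
    have hbound₂ := hbound (n + n) (by omega) v hv
    have hhalf' : d ^ n = 2 * depth v (iter f n) := by have := heven n hn; omega
    rw [iter_add, pow_add] at hbound₂
    rw [hhalf'] at hgrow hbound₂
    nlinarith

/-- For `d` even and a degree-`d` pair `f ∉ I(d)`, all iterates `f^n` are nonzero, and
every iterate `f^n` is stable iff every hole of every `f^n` has depth at most `d^n/2`. -/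
theorem even_degree_all_iterates_stable_iff (d : ℕ) (hd : 2 ≤ d) (hdeven : Even d)
    (f : Pair) (hf : IsDegPair d f) (hI : ¬ IsIndet f) :
    (∀ n : ℕ, 1 ≤ n → iter f n ≠ 0) ∧
    ((∀ n : ℕ, 1 ≤ n → Stable (d ^ n) (iter f n)) ↔
      ∀ n : ℕ, 1 ≤ n → ∀ v : ℂ × ℂ, v ≠ 0 → 2 * depth v (iter f n) ≤ d ^ n) :=
  even_degree_all_iterates_stable_iff_general d hdeven f hf hI
end
end

section
/- Let a, b ∈ ℂ with b ≠ 0, let δ > 0, and let α, β, γ : (0, δ) → ℂ be functions such that for every t ∈ (0, δ) the polynomial identity b·t·X³ − X² + (a·t − 2)·X + (2·b·t − 1) = b·t·(X − α(t))·(X − β(t))·(X − γ(t)) holds in ℂ[X], and suppose |γ(t)| → ∞ as t → 0⁺. Then (α(t)² − 1)² / (1 − α(t)·β(t)) → (b − a)/b as t → 0⁺. -/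
/-!
With `ε = b t`, the cubic degenerates to `-(X + 1)²` as `t → 0⁺`. Dividing the root equation of
`γ` by `γ²` gives `ε γ → 1`; Vieta's formulas then give `α β → 1` and `α + β → -2`, hence
`α, β → -1`. The root equation of `α` reads `(α + 1)² = t (b α³ + a α + 2 b)`, so
`(α + 1)² / t → b - a`, and Vieta gives `(1 - α β) / t = b (2 - α - β) / (ε γ) → 4 b`. Therefore
`(α² - 1)² / (1 - α β) = ((α + 1)² / t) (α - 1)² / ((1 - α β) / t) → 4 (b - a) / (4 b)`.
-/

noncomputable section

open Filter Topology Polynomial Bornology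

theorem le_add_sqrt_of_sq_le {x A B : ℝ} (hA : 0 ≤ A) (hB : 0 ≤ B) (h : x ^ 2 ≤ A * x + B) :
    x ≤ A + √B := by
  by_contra! hlt
  have hsqrt : √B < x := (le_add_of_nonneg_left hA).trans_lt hlt
  have hx : 0 < x := (Real.sqrt_nonneg B).trans_lt hsqrt
  nlinarith [Real.sq_sqrt hB, Real.sqrt_nonneg B, mul_lt_mul_of_pos_right hlt hx]

theorem tendsto_of_tendsto_add_of_tendsto_mul {ι 𝕜 : Type*} [NormedField 𝕜] {l : Filter ι}
    {f g : ι → 𝕜} {r : 𝕜} (hadd : Tendsto (fun i => f i + g i) l (𝓝 (r + r)))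
    (hmul : Tendsto (fun i => f i * g i) l (𝓝 (r * r))) : Tendsto f l (𝓝 r) := by
  have hA : Tendsto (fun i => ‖f i + g i - (r + r)‖) l (𝓝 0) :=
    tendsto_iff_norm_sub_tendsto_zero.1 hadd
  have hB : Tendsto (fun i => ‖(f i - r) * (g i - r)‖) l (𝓝 0) := by
    have : Tendsto (fun i => f i * g i - r * (f i + g i) + r * r) l
        (𝓝 (r * r - r * (r + r) + r * r)) := (hmul.sub (hadd.const_mul r)).add_const _
    rw [show r * r - r * (r + r) + r * r = 0 by ring] at this
    simpa [← norm_mul, show ∀ i, (f i - r) * (g i - r) = f i * g i - r * (f i + g i) + r * r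
      from fun i => by ring] using this.norm
  rw [tendsto_iff_norm_sub_tendsto_zero]
  refine squeeze_zero (fun _ => norm_nonneg _) (fun i => le_add_sqrt_of_sq_le (norm_nonneg _)
    (norm_nonneg _) ?_) (by simpa only [Real.sqrt_zero, add_zero] using hA.add hB.sqrt)
  calc ‖f i - r‖ ^ 2 = ‖(f i + g i - (r + r)) * (f i - r) - (f i - r) * (g i - r)‖ := by
        rw [← norm_pow]; ring_nf
    _ ≤ ‖f i + g i - (r + r)‖ * ‖f i - r‖ + ‖(f i - r) * (g i - r)‖ := by
        rw [← norm_mul]; exact norm_sub_le _ _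

theorem cubic_vieta {R : Type*} [CommRing R] {c d e f x y z : R}
    (h : C c * X ^ 3 + C d * X ^ 2 + C e * X + C f = C c * (X - C x) * (X - C y) * (X - C z)) :
    c * (x + y + z) = -d ∧ c * (x * y + x * z + y * z) = e ∧ c * (x * y * z) = -f := by
  have hexp : C c * (X - C x) * (X - C y) * (X - C z) =
      C c * X ^ 3 + C (-(c * (x + y + z))) * X ^ 2 + C (c * (x * y + x * z + y * z)) * X
        + C (-(c * (x * y * z))) := by
    simp only [map_neg, map_mul, map_add]; ring
  rw [hexp] at h
  have h2 := congrArg (coeff · 2) h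
  have h1 := congrArg (coeff · 1) h
  have h0 := congrArg (coeff · 0) h
  simp only [coeff_add, coeff_C_mul, coeff_X_pow, coeff_X, coeff_C] at h2 h1 h0
  norm_num at h2 h1 h0
  exact ⟨by rw [h2]; ring, h1.symm, by rw [h0]; ring⟩

def multiplierCubic (a b t : ℂ) : ℂ[X] :=
  C (b * t) * X ^ 3 - X ^ 2 + C (a * t - 2) * X + C (2 * b * t - 1)

theorem multiplierCubic_vieta {a b t x y z : ℂ}
    (h : multiplierCubic a b t = C (b * t) * (X - C x) * (X - C y) * (X - C z)) :
    b * t * (x + y + z) = 1 ∧ b * t * (x * y + x * z + y * z) = a * t - 2 ∧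
      b * t * (x * y * z) = 1 - 2 * b * t := by
  have hcoeff : multiplierCubic a b t =
      C (b * t) * X ^ 3 + C (-1) * X ^ 2 + C (a * t - 2) * X + C (2 * b * t - 1) := by
    rw [multiplierCubic, map_neg, map_one]; ring
  obtain ⟨h2, h1, h0⟩ := cubic_vieta (hcoeff.symm.trans h)
  exact ⟨by rw [h2]; ring, h1, by rw [h0]; ring⟩

namespace multiplierCubic

variable {ι : Type*} {l : Filter ι} {a b : ℂ} {t α β γ : ι → ℂ}

theorem tendsto_mul_largeRoot (ht : Tendsto t l (𝓝 0)) (hγ : Tendsto γ l (cobounded ℂ))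
    (hfac : ∀ᶠ i in l, multiplierCubic a b (t i) =
      C (b * t i) * (X - C (α i)) * (X - C (β i)) * (X - C (γ i))) :
    Tendsto (fun i => b * t i * γ i) l (𝓝 1) := by
  have hinv : Tendsto (fun i => (γ i)⁻¹) l (𝓝 0) := tendsto_inv₀_cobounded.comp hγ
  have hlim : Tendsto (fun i => 1 + (2 - a * t i) * (γ i)⁻¹ + (1 - 2 * b * t i) * (γ i)⁻¹ ^ 2)
      l (𝓝 1) := by
    have hc : Continuous fun p : ℂ × ℂ => 1 + (2 - a * p.1) * p.2 + (1 - 2 * b * p.1) * p.2 ^ 2 :=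
      by fun_prop
    simpa [Function.comp_def] using (hc.tendsto (0, 0)).comp (ht.prodMk_nhds hinv)
  refine hlim.congr' ?_
  filter_upwards [hfac, hγ.eventually (eventually_ne_cobounded 0)] with i hi hγi
  obtain ⟨h1, h2, h3⟩ := multiplierCubic_vieta hi
  have hroot : b * t i * γ i ^ 3 - γ i ^ 2 + (a * t i - 2) * γ i + (2 * b * t i - 1) = 0 := by
    linear_combination γ i ^ 2 * h1 - γ i * h2 + h3
  field_simp
  linear_combination -hroot

theorem tendsto_mul_smallRoots (ht : Tendsto t l (𝓝 0))
    (hεγ : Tendsto (fun i => b * t i * γ i) l (𝓝 1))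
    (hfac : ∀ᶠ i in l, multiplierCubic a b (t i) =
      C (b * t i) * (X - C (α i)) * (X - C (β i)) * (X - C (γ i))) :
    Tendsto (fun i => α i * β i) l (𝓝 1) := by
  have hlim : Tendsto (fun i => (1 - 2 * b * t i) / (b * t i * γ i)) l (𝓝 1) := by
    simpa [Pi.div_def] using (tendsto_const_nhds.sub (ht.const_mul (2 * b))).div hεγ one_ne_zero
  refine hlim.congr' ?_
  filter_upwards [hfac, hεγ.eventually_ne one_ne_zero] with i hi hεγi
  obtain ⟨-, -, h3⟩ := multiplierCubic_vieta hi
  rw [div_eq_iff hεγi]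
  linear_combination -h3

theorem tendsto_add_smallRoots (ht : Tendsto t l (𝓝 0))
    (hεγ : Tendsto (fun i => b * t i * γ i) l (𝓝 1))
    (hαβ : Tendsto (fun i => α i * β i) l (𝓝 1))
    (hfac : ∀ᶠ i in l, multiplierCubic a b (t i) =
      C (b * t i) * (X - C (α i)) * (X - C (β i)) * (X - C (γ i))) :
    Tendsto (fun i => α i + β i) l (𝓝 (-2)) := by
  have hlim : Tendsto (fun i => (a * t i - 2 - b * t i * (α i * β i)) / (b * t i * γ i)) l
      (𝓝 (-2)) := by
    simpa [Pi.div_def] using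
      (((ht.const_mul a).sub_const 2).sub ((ht.const_mul b).mul hαβ)).div hεγ one_ne_zero
  refine hlim.congr' ?_
  filter_upwards [hfac, hεγ.eventually_ne one_ne_zero] with i hi hεγi
  obtain ⟨-, h2, -⟩ := multiplierCubic_vieta hi
  rw [div_eq_iff hεγi]
  linear_combination -h2

theorem tendsto_sq_add_one_div (hα : Tendsto α l (𝓝 (-1))) (ht0 : ∀ᶠ i in l, t i ≠ 0)
    (hfac : ∀ᶠ i in l, multiplierCubic a b (t i) =
      C (b * t i) * (X - C (α i)) * (X - C (β i)) * (X - C (γ i))) :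
    Tendsto (fun i => (α i + 1) ^ 2 / t i) l (𝓝 (b - a)) := by
  have hlim : Tendsto (fun i => b * α i ^ 3 + a * α i + 2 * b) l (𝓝 (b - a)) := by
    convert (((hα.pow 3).const_mul b).add (hα.const_mul a)).add_const (2 * b) using 2
    ring
  refine hlim.congr' ?_
  filter_upwards [hfac, ht0] with i hi hti
  obtain ⟨h1, h2, h3⟩ := multiplierCubic_vieta hi
  have hroot : b * t i * α i ^ 3 - α i ^ 2 + (a * t i - 2) * α i + (2 * b * t i - 1) = 0 := by
    linear_combination α i ^ 2 * h1 - α i * h2 + h3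
  rw [eq_div_iff hti]
  linear_combination hroot

theorem tendsto_one_sub_mul_div (hαβ : Tendsto (fun i => α i + β i) l (𝓝 (-2)))
    (hεγ : Tendsto (fun i => b * t i * γ i) l (𝓝 1)) (ht0 : ∀ᶠ i in l, t i ≠ 0)
    (hfac : ∀ᶠ i in l, multiplierCubic a b (t i) =
      C (b * t i) * (X - C (α i)) * (X - C (β i)) * (X - C (γ i))) :
    Tendsto (fun i => (1 - α i * β i) / t i) l (𝓝 (4 * b)) := by
  have hlim : Tendsto (fun i => b * (2 - (α i + β i)) / (b * t i * γ i)) l (𝓝 (4 * b)) := by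
    have h := ((hαβ.const_sub 2).const_mul b).div hεγ one_ne_zero
    rwa [show b * (2 - -2) / 1 = 4 * b by ring] at h
  refine hlim.congr' ?_
  filter_upwards [hfac, ht0, hεγ.eventually_ne one_ne_zero] with i hi hti hεγi
  obtain ⟨h1, -, h3⟩ := multiplierCubic_vieta hi
  rw [div_eq_div_iff hεγi hti]
  linear_combination h3 - h1

end multiplierCubic

/-- The multiplier computation of the paper (case `q = 2`): if for `t ∈ (0, δ)` the
numbers `α(t), β(t), γ(t)` are the three roots of
`b t X³ - X² + (a t - 2) X + (2 b t - 1)`, with `|γ(t)| → ∞` as `t → 0⁺`, then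
`(α(t)² - 1)² / (1 - α(t) β(t)) → (b - a)/b` as `t → 0⁺`. -/
theorem multiplier_limit (a b : ℂ) (hb : b ≠ 0) (δ : ℝ) (hδ : 0 < δ)
    (α β γ : ℝ → ℂ)
    (hroots : ∀ t ∈ Set.Ioo (0 : ℝ) δ,
      C (b * (t : ℂ)) * X ^ 3 - X ^ 2 + C (a * (t : ℂ) - 2) * X + C (2 * b * (t : ℂ) - 1) =
        C (b * (t : ℂ)) * (X - C (α t)) * (X - C (β t)) * (X - C (γ t)))
    (hγ : Tendsto (fun t : ℝ => ‖γ t‖) (𝓝[>] 0) atTop) :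
    Tendsto (fun t : ℝ => ((α t) ^ 2 - 1) ^ 2 / (1 - α t * β t)) (𝓝[>] 0)
      (𝓝 ((b - a) / b)) := by
  have hfac : ∀ᶠ s : ℝ in 𝓝[>] 0, multiplierCubic a b s =
      C (b * (s : ℂ)) * (X - C (α s)) * (X - C (β s)) * (X - C (γ s)) :=
    mem_of_superset (Ioo_mem_nhdsGT hδ) hroots
  have ht : Tendsto (fun s : ℝ => (s : ℂ)) (𝓝[>] 0) (𝓝 0) :=
    (Complex.continuous_ofReal.tendsto' 0 0 Complex.ofReal_zero).mono_left nhdsWithin_le_nhds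
  have ht0 : ∀ᶠ s : ℝ in 𝓝[>] 0, (s : ℂ) ≠ 0 :=
    eventually_mem_nhdsWithin.mono fun s hs => Complex.ofReal_ne_zero.2 (ne_of_gt hs)
  have hεγ :=
    multiplierCubic.tendsto_mul_largeRoot ht (tendsto_norm_atTop_iff_cobounded.1 hγ) hfac
  have hαβ := multiplierCubic.tendsto_mul_smallRoots ht hεγ hfac
  have hσ := multiplierCubic.tendsto_add_smallRoots ht hεγ hαβ hfac
  have hα : Tendsto α (𝓝[>] 0) (𝓝 (-1)) :=
    tendsto_of_tendsto_add_of_tendsto_mul (g := β) (by norm_num [hσ]) (by norm_num [hαβ])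
  have hnum := (multiplierCubic.tendsto_sq_add_one_div hα ht0 hfac).mul ((hα.sub_const 1).pow 2)
  have hlim := hnum.div (multiplierCubic.tendsto_one_sub_mul_div hσ hεγ ht0 hfac)
    (mul_ne_zero (by norm_num) hb)
  rw [show (b - a) * (-1 - 1) ^ 2 / (4 * b) = (b - a) / b by field_simp; ring] at hlim
  refine hlim.congr' ?_
  filter_upwards [ht0] with s hs
  rw [Pi.div_apply, div_mul_eq_mul_div, div_div_div_cancel_right₀ hs]
  ring
end
end

section
/- For c ∈ ℂ define f_c(z) = (z² − 1)/(c·z² + 1). Then: (i) for every z ∈ ℂ with z⁴ ≠ 1, the second iterate f_c(f_c(z)) = ((f_c(z))² − 1)/(c·(f_c(z))² + 1) tends to −2z²/(z² + 1) as c → −1 (through c ≠ −1); (ii) the degree-2 pair (−2z², z² + w²) is conjugate to the degree-2 pair (z² + (1/4)·w², w²), i.e. the rational map −2z²/(z²+1) is Möbius-conjugate to the quadratic polynomial z² + 1/4. -/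
noncomputable section

open MvPolynomial

/-! Clearing denominators in `f_c ∘ f_c` produces the factor `1 + c` in both numerator and
denominator; cancelling it leaves `z²((1 - c)z² - 2)/(cz⁴ + 1)`, which is continuous at
`c = -1`. The limit map `-2z²/(z² + 1)` is conjugated to `z² + 1/4` by the Möbius map
`z ↦ -1/(2z)`. -/

def basilicaFamily (c z : ℂ) : ℂ := (z ^ 2 - 1) / (c * z ^ 2 + 1)

theorem basilicaFamily_basilicaFamily {c z : ℂ} (hc : c ≠ -1) (hz : c * z ^ 2 + 1 ≠ 0) :
    basilicaFamily c (basilicaFamily c z) = z ^ 2 * ((1 - c) * z ^ 2 - 2) / (c * z ^ 4 + 1) := by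
  have hc' : 1 + c ≠ 0 := fun h => hc (by linear_combination h)
  have hnum : basilicaFamily c z ^ 2 - 1 =
      (1 + c) * (z ^ 2 * ((1 - c) * z ^ 2 - 2)) / (c * z ^ 2 + 1) ^ 2 := by
    rw [eq_div_iff (pow_ne_zero 2 hz), basilicaFamily, div_pow, div_sub_one (pow_ne_zero 2 hz),
      div_mul_cancel₀ _ (pow_ne_zero 2 hz)]
    ring
  have hden : c * basilicaFamily c z ^ 2 + 1 =
      (1 + c) * (c * z ^ 4 + 1) / (c * z ^ 2 + 1) ^ 2 := by
    unfold basilicaFamily; field_simp; ring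
  rw [basilicaFamily, hnum, hden, div_div_div_cancel_right₀ (pow_ne_zero 2 hz),
    mul_div_mul_left _ _ hc']

open Filter Topology in
theorem tendsto_basilicaFamily_basilicaFamily {z : ℂ} (hz : z ^ 4 ≠ 1) :
    Tendsto (fun c => basilicaFamily c (basilicaFamily c z)) (𝓝[≠] (-1))
      (𝓝 (-2 * z ^ 2 / (z ^ 2 + 1))) := by
  have hsq : z ^ 2 - 1 ≠ 0 := fun h => hz (by linear_combination (z ^ 2 + 1) * h)
  have hsq' : z ^ 2 + 1 ≠ 0 := fun h => hz (by linear_combination (z ^ 2 - 1) * h)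
  have hquart : -1 * z ^ 4 + 1 ≠ 0 := fun h => hz (by linear_combination -h)
  have hlim : Tendsto (fun c : ℂ => z ^ 2 * ((1 - c) * z ^ 2 - 2) / (c * z ^ 4 + 1)) (𝓝[≠] (-1))
      (𝓝 (-2 * z ^ 2 / (z ^ 2 + 1))) := by
    have hval : z ^ 2 * ((1 - -1) * z ^ 2 - 2) / (-1 * z ^ 4 + 1) = -2 * z ^ 2 / (z ^ 2 + 1) := by
      rw [div_eq_div_iff hquart hsq']; ring
    have hcont : ContinuousAt (fun c : ℂ => z ^ 2 * ((1 - c) * z ^ 2 - 2) / (c * z ^ 4 + 1)) (-1) :=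
      ContinuousAt.div (by fun_prop) (by fun_prop) hquart
    exact hval ▸ hcont.tendsto.mono_left nhdsWithin_le_nhds
  refine hlim.congr' ?_
  have hden : ∀ᶠ c in 𝓝[≠] (-1 : ℂ), c * z ^ 2 + 1 ≠ 0 :=
    eventually_nhdsWithin_of_eventually_nhds <|
      (by fun_prop : ContinuousAt (fun c : ℂ => c * z ^ 2 + 1) (-1)).eventually_ne
        fun h => hsq (by linear_combination -h)
  filter_upwards [hden, self_mem_nhdsWithin] with c hc hne
  exact (basilicaFamily_basilicaFamily hne hc).symm

lemma conjugate_of_mul_eq_one {f g : Pair} {A B : Matrix (Fin 2) (Fin 2) ℂ} (hAB : A * B = 1)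
    {c : ℂ} (hc : c ≠ 0) (h : g = c • comp (matPair A) (comp f (matPair B))) : Conjugate f g :=
  ⟨⟨A, B, hAB, mul_eq_one_comm.mp hAB⟩, c, hc, h⟩

theorem conjugate_neg_two_sq_cauliflower :
    Conjugate (-(C 2 * X 0 ^ 2), X 0 ^ 2 + X 1 ^ 2) (X 0 ^ 2 + C (1 / 4 : ℂ) * X 1 ^ 2, X 1 ^ 2) := by
  refine conjugate_of_mul_eq_one (A := !![0, -1/2; 1, 0]) (B := !![0, 1; -2, 0]) (c := -1/2)
    ?_ (by norm_num) ?_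
  · ext i j
    fin_cases i <;> fin_cases j <;> norm_num [Matrix.mul_apply, Fin.sum_univ_two]
  · have hu : C (-1/2 : ℂ) * C 2 = (-1 : MvPoly2) := by rw [← C_mul]; norm_num
    have hq : (C (1/4 : ℂ) : MvPoly2) = C (-1/2 : ℂ) ^ 2 := by rw [← C_pow]; norm_num
    simp only [comp, matPair, Matrix.of_apply, Matrix.cons_val', Matrix.cons_val_zero,
      Matrix.cons_val_one, Matrix.cons_val_fin_one, map_zero, map_one, aeval_eq_bind₁, map_neg,
      map_mul, map_pow, map_add, algHom_C, algebraMap_eq, bind₁_X_right, Prod.smul_mk,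
      smul_eq_C_mul, Prod.mk.injEq]
    constructor
    · linear_combination X 1 ^ 2 * hq + X 0 ^ 2 * (1 - C (-1/2 : ℂ) * C 2) * hu
    · linear_combination X 1 ^ 2 * hu

open Filter Topology in
/-- For `f_c(z) = (z² - 1)/(c z² + 1)`: (i) for `z⁴ ≠ 1`, the second iterate
`f_c(f_c(z))` tends to `-2z²/(z² + 1)` as `c → -1` through `c ≠ -1`; (ii) the pair
`(-2z², z² + w²)` is conjugate to the pair `(z² + (1/4)w², w²)`, i.e. `-2z²/(z²+1)` is
Möbius-conjugate to the polynomial `z² + 1/4`. -/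
theorem basilica_mating_obstruction :
    (∀ z : ℂ, z ^ 4 ≠ 1 →
      Tendsto (fun c : ℂ =>
          (((z ^ 2 - 1) / (c * z ^ 2 + 1)) ^ 2 - 1) /
            (c * ((z ^ 2 - 1) / (c * z ^ 2 + 1)) ^ 2 + 1))
        (𝓝[≠] (-1 : ℂ)) (𝓝 (-2 * z ^ 2 / (z ^ 2 + 1)))) ∧
    Conjugate (-(C 2 * X 0 ^ 2), X 0 ^ 2 + X 1 ^ 2)
      (X 0 ^ 2 + C (1 / 4 : ℂ) * X 1 ^ 2, X 1 ^ 2) :=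
  ⟨fun _ hz => tendsto_basilicaFamily_basilicaFamily hz, conjugate_neg_two_sq_cauliflower⟩
end
end
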